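/- Define the closed-form squared 2-Wasserstein distance between two Gaussian distributions with means m₁, m₂ ∈ ℝⁿ and positive semidefinite covariance matrices C₁, C₂ by W²(m₁,C₁,m₂,C₂) = ‖m₁ − m₂‖² + Tr(C₁) + Tr(C₂) − 2·Tr((C₁^{1/2} · C₂ · C₁^{1/2})^{1/2}). Then W²(m₁,C₁,m₂,C₂) ≥ 0 for all means m₁, m₂ and all positive semidefinite covariances C₁, C₂. -/

import Mathlib

open Matrix

namespace Matrix.PosSemidef

open scoped ComplexOrder

variable {n 𝕜 : Type*} [Fintype n] [RCLike 𝕜] [DecidableEq n] {A : Matrix n n 𝕜}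

/-- The positive semidefinite square root of a positive semidefinite matrix
(the definition of the older Mathlib, removed since). -/
noncomputable def sqrt (hA : A.PosSemidef) : Matrix n n 𝕜 :=
  hA.1.eigenvectorUnitary.1 * diagonal ((↑) ∘ (√·) ∘ hA.1.eigenvalues) *
  (star hA.1.eigenvectorUnitary : Matrix n n 𝕜)

lemma posSemidef_sqrt (hA : A.PosSemidef) : PosSemidef hA.sqrt := by
  apply PosSemidef.mul_mul_conjTranspose_same
  refine posSemidef_diagonal_iff.mpr fun i ↦ ?_
  rw [Function.comp_apply, RCLike.nonneg_iff]
  constructor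
  · simp only [Function.comp_apply, RCLike.ofReal_re]
    exact Real.sqrt_nonneg _
  · simp only [Function.comp_apply, RCLike.ofReal_im]

end Matrix.PosSemidef

lemma psd_sqrt_mul_self {n : ℕ} {M : Matrix (Fin n) (Fin n) ℝ} (hM : M.PosSemidef) :
    hM.sqrt * hM.sqrt = M := by
  set U := hM.1.eigenvectorUnitary with hU
  set D : Matrix (Fin n) (Fin n) ℝ := diagonal ((↑) ∘ (√·) ∘ hM.1.eigenvalues) with hD
  have hsUU : (star U : Matrix (Fin n) (Fin n) ℝ) * U = 1 := Unitary.coe_star_mul_self U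
  have hd : D * D = diagonal (RCLike.ofReal ∘ hM.1.eigenvalues) := by
    rw [hD, diagonal_mul_diagonal]; congr 1; funext i
    simp [Real.mul_self_sqrt (hM.eigenvalues_nonneg i)]
  calc hM.sqrt * hM.sqrt = U.1 * (D * (((star U : Matrix (Fin n) (Fin n) ℝ) * U) * D))
        * (star U : Matrix (Fin n) (Fin n) ℝ) := by
        simp only [Matrix.PosSemidef.sqrt, Matrix.mul_assoc]; rfl
    _ = U.1 * (D * D) * (star U : Matrix (Fin n) (Fin n) ℝ) := by rw [hsUU, Matrix.one_mul]
    _ = M := by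
        rw [hd]; conv_rhs => rw [hM.1.spectral_theorem]
        rw [Unitary.conjStarAlgAut_apply]


lemma psd_trace_nonneg {n : ℕ} {M : Matrix (Fin n) (Fin n) ℝ} (hM : M.PosSemidef) :
    0 ≤ M.trace := by
  rw [Matrix.trace]
  refine Finset.sum_nonneg fun i _ => ?_
  exact hM.diag_nonneg

lemma two_trace_sqrt_le {n : ℕ} {C₁ C₂ : Matrix (Fin n) (Fin n) ℝ}
    (h₁ : C₁.PosSemidef) (h₂ : C₂.PosSemidef)
    (hS : (h₁.sqrt * C₂ * h₁.sqrt).PosSemidef) :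
    2 * hS.sqrt.trace ≤ C₁.trace + C₂.trace := by
  set A := h₁.sqrt with hAdef
  set B := h₂.sqrt with hBdef
  set T := hS.sqrt with hTdef
  have hA : A.PosSemidef := h₁.posSemidef_sqrt
  have hB : B.PosSemidef := h₂.posSemidef_sqrt
  have hT : T.PosSemidef := hS.posSemidef_sqrt
  have hTH : T.IsHermitian := hT.isHermitian
  set U : Matrix (Fin n) (Fin n) ℝ := (hTH.eigenvectorUnitary : Matrix (Fin n) (Fin n) ℝ) with hU
  set μ : Fin n → ℝ := hTH.eigenvalues with hμ
  have hsUU : star U * U = 1 := (Matrix.mem_unitaryGroup_iff').mp hTH.eigenvectorUnitary.2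
  have hmul : ∀ f g : Fin n → ℝ,
      (U * diagonal f * star U) * (U * diagonal g * star U) = U * diagonal (f * g) * star U := by
    intro f g
    calc (U * diagonal f * star U) * (U * diagonal g * star U)
        = U * (diagonal f * ((star U * U) * diagonal g)) * star U := by
          simp only [Matrix.mul_assoc]
      _ = U * diagonal (f * g) * star U := by
          rw [hsUU, Matrix.one_mul, diagonal_mul_diagonal, Pi.mul_def]
  have hspec : T = U * diagonal μ * star U := by
    have := hTH.spectral_theorem
    simpa using this
  set P : Matrix (Fin n) (Fin n) ℝ := U * diagonal (fun i => (μ i)⁻¹) * star U with hP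
  have hμ0 : ∀ i, 0 ≤ μ i := fun i => hT.eigenvalues_nonneg i
  have hfun1 : ((fun i => (μ i)⁻¹) * μ * μ) = μ := by
    funext i
    simp only [Pi.mul_apply]
    by_cases h : μ i = 0
    · simp [h]
    · field_simp
  have hfun2 : ((fun i => (μ i)⁻¹) * μ * fun i => (μ i)⁻¹) = fun i => (μ i)⁻¹ := by
    funext i
    simp only [Pi.mul_apply]
    by_cases h : μ i = 0
    · simp [h]
    · rw [inv_mul_cancel₀ h, one_mul]
  have hPTT : P * T * T = T := by
    rw [hspec, hP, hmul, hmul, hfun1]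
  have hPTP : P * T * P = P := by
    rw [hspec, hP, hmul, hmul, hfun2]
  have hPpsd : P.PosSemidef := by
    have hd : (diagonal fun i => (μ i)⁻¹ : Matrix (Fin n) (Fin n) ℝ).PosSemidef :=
      Matrix.posSemidef_diagonal_iff.mpr (fun i => inv_nonneg.mpr (hμ0 i))
    have := hd.mul_mul_conjTranspose_same U
    rwa [hP, Matrix.star_eq_conjTranspose]
  have hPH : Pᴴ = P := hPpsd.isHermitian.eq
  have hAH : Aᴴ = A := hA.isHermitian.eq
  have hBH : Bᴴ = B := hB.isHermitian.eq
  have hTT : T * T = A * C₂ * A := psd_sqrt_mul_self hS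
  have hBB : B * B = C₂ := psd_sqrt_mul_self h₂
  have hAA : A * A = C₁ := psd_sqrt_mul_self h₁
  set Q : Matrix (Fin n) (Fin n) ℝ := B * A * P with hQ
  have hQH : Qᴴ = P * (A * B) := by
    rw [hQ, conjTranspose_mul, hPH, conjTranspose_mul, hAH, hBH]
  have hQQ : Qᴴ * Q = T * P := by
    rw [hQH, hQ]
    have e : P * (A * B) * (B * A * P) = P * (A * C₂ * A) * P := by
      rw [← hBB]; simp only [Matrix.mul_assoc]
    rw [e, ← hTT, show P * (T * T) = P * T * T from (Matrix.mul_assoc P T T).symm, hPTT]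
  set R : Matrix (Fin n) (Fin n) ℝ := Q * Qᴴ with hR
  have hRH : Rᴴ = R := by rw [hR]; simp
  have hRidem : R * R = R := by
    calc R * R = Q * (Qᴴ * Q) * Qᴴ := by rw [hR]; simp only [Matrix.mul_assoc]
      _ = Q * (T * P) * Qᴴ := by rw [hQQ]
      _ = B * A * (P * T * P) * Qᴴ := by rw [hQ]; simp only [Matrix.mul_assoc]
      _ = B * A * P * Qᴴ := by rw [hPTP]
      _ = R := by rw [hR, hQ]
  have hIR : (1 - R).PosSemidef := by
    have h1 : (1 - R)ᴴ * (1 - R) = 1 - R := by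
      rw [Matrix.conjTranspose_sub, hRH, Matrix.conjTranspose_one,
        Matrix.sub_mul, Matrix.mul_sub, Matrix.mul_sub, hRidem]
      simp
    have := Matrix.posSemidef_conjTranspose_mul_self (1 - R)
    rwa [h1] at this
  have htr1 : (B * R * B).trace ≤ C₂.trace := by
    have hpsd : (B * (1 - R) * B).PosSemidef := by
      have := hIR.mul_mul_conjTranspose_same B
      rwa [hBH] at this
    have h0 := psd_trace_nonneg hpsd
    have hexp : B * (1 - R) * B = C₂ - B * R * B := by
      rw [Matrix.mul_sub, Matrix.sub_mul, Matrix.mul_one, hBB]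
    rw [hexp, trace_sub] at h0
    linarith
  have htr2 : (A * Qᴴ * B).trace = T.trace := by
    have e1 : A * Qᴴ * B = A * P * (A * C₂) := by
      rw [hQH, ← hBB]; simp only [Matrix.mul_assoc]
    have e2 : A * C₂ * (A * P) = T * T * P := by
      rw [hTT]; simp only [Matrix.mul_assoc]
    calc (A * Qᴴ * B).trace = (A * P * (A * C₂)).trace := by rw [e1]
      _ = (A * C₂ * (A * P)).trace := trace_mul_comm _ _
      _ = (T * T * P).trace := by rw [e2]
      _ = (P * (T * T)).trace := trace_mul_comm _ _
      _ = T.trace := by rw [← Matrix.mul_assoc, hPTT]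
  have htr3 : (B * Q * A).trace = T.trace := by
    have hct : (B * Q * A)ᴴ = A * (Qᴴ * B) := by
      rw [conjTranspose_mul, hAH, conjTranspose_mul, hBH]
    have h := Matrix.trace_conjTranspose (B * Q * A)
    rw [hct, ← Matrix.mul_assoc, htr2] at h
    simpa using h.symm
  set X : Matrix (Fin n) (Fin n) ℝ := Qᴴ * B - A with hX
  have hXpsd : (Xᴴ * X).PosSemidef := posSemidef_conjTranspose_mul_self X
  have hXH : Xᴴ = B * Q - A := by
    rw [hX, Matrix.conjTranspose_sub, hAH, conjTranspose_mul, hBH, conjTranspose_conjTranspose]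
  have hexp : Xᴴ * X = B * R * B - B * Q * A - A * Qᴴ * B + C₁ := by
    rw [hXH, hX, Matrix.sub_mul, Matrix.mul_sub, Matrix.mul_sub, hAA, hR]
    simp only [Matrix.mul_assoc]
    abel
  have h0 := psd_trace_nonneg hXpsd
  rw [hexp, trace_add, trace_sub, trace_sub, htr3] at h0
  rw [Matrix.mul_assoc] at htr2
  rw [Matrix.mul_assoc (A) (Qᴴ) (B), htr2] at h0
  linarith

/-- If `C₁` and `C₂` are positive semidefinite, then so is `C₁^{1/2} * C₂ * C₁^{1/2}`. -/
lemma sandwich_posSemidef {n : ℕ} {C₁ C₂ : Matrix (Fin n) (Fin n) ℝ}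
    (h₁ : C₁.PosSemidef) (h₂ : C₂.PosSemidef) :
    (h₁.sqrt * C₂ * h₁.sqrt).PosSemidef := by
  have h := h₂.mul_mul_conjTranspose_same h₁.sqrt
  rwa [h₁.posSemidef_sqrt.isHermitian.eq] at h

/-- Closed-form squared 2-Wasserstein distance between the Gaussians
`N(m₁, C₁)` and `N(m₂, C₂)`. -/
noncomputable def wasserstein2Sq {n : ℕ} (m₁ m₂ : EuclideanSpace ℝ (Fin n))
    {C₁ C₂ : Matrix (Fin n) (Fin n) ℝ} (h₁ : C₁.PosSemidef) (h₂ : C₂.PosSemidef) : ℝ :=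
  ‖m₁ - m₂‖ ^ 2 + C₁.trace + C₂.trace - 2 * ((sandwich_posSemidef h₁ h₂).sqrt).trace

/-- The closed-form squared 2-Wasserstein distance between Gaussians is nonnegative. -/
theorem wasserstein2Sq_nonneg {n : ℕ} (m₁ m₂ : EuclideanSpace ℝ (Fin n))
    {C₁ C₂ : Matrix (Fin n) (Fin n) ℝ} (h₁ : C₁.PosSemidef) (h₂ : C₂.PosSemidef) :
    0 ≤ wasserstein2Sq m₁ m₂ h₁ h₂ := by
  have h := two_trace_sqrt_le h₁ h₂ (sandwich_posSemidef h₁ h₂)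
  have h2 : (0:ℝ) ≤ ‖m₁ - m₂‖ ^ 2 := sq_nonneg _
  rw [wasserstein2Sq]
  linarith
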